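/- Let F : partitions of a finite agent set → partitions, be a process that at each step either (a) solves a group to optimality with respect to the other groups' fixed actions, or (b) merges groups upon discovering a cross-group conflict. Since merges strictly decrease the number of blocks and case (a) cannot occur infinitely often without reaching a state where every group is solved optimally and no cross-group conflicts exist, the process terminates; at termination, the combined solution is globally optimal. -/

import Mathlib

/-!
Every step lowers the pair (number of blocks, number of non-block-optimal blocks) in the
lexicographic order on `ℕ × ℕ`, which is well founded, so there is no infinite run. A terminal
state admits no step, so every block is block-optimal; as a block cost only sees the actions
of its own agents, optimality against deviations inside the block is optimality against all
joint actions, and summing over the blocks gives global optimality.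
-/

theorem not_forall_rel_of_lex_lt {α : Type*} {r : α → α → Prop} (μ ν : α → ℕ)
    (h : ∀ s s', r s s' → μ s' < μ s ∨ μ s' = μ s ∧ ν s' < ν s) (seq : ℕ → α) :
    ¬ ∀ t, r (seq t) (seq (t + 1)) := fun hall => by
  obtain ⟨t, ht⟩ := WellFounded.not_rel_apply_succ (r := (· < ·)) fun t => toLex (μ (seq t), ν (seq t))
  exact ht (Prod.Lex.toLex_lt_toLex.mpr (h _ _ (hall t)))

open Classical in
theorem DependsOn.le_of_forall_eqOn_compl_le {ι : Type*} {A : ι → Type*} {f : (∀ i, A i) → ℝ}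
    {b : Finset ι} (hf : DependsOn f b) {a : ∀ i, A i}
    (hopt : ∀ a', (∀ i ∉ b, a' i = a i) → f a ≤ f a') (a' : ∀ i, A i) : f a ≤ f a' :=
  calc f a ≤ f (b.piecewise a' a) := hopt _ fun _ hi => b.piecewise_eq_of_notMem _ _ hi
    _ = f a' := hf fun _ hi => b.piecewise_eq_of_mem _ _ hi

open Classical in
theorem stmt_14_general {ι : Type} [Fintype ι] [DecidableEq ι]
    (A : ι → Type)
    (f : Finset ι → (∀ i, A i) → ℝ)
    (hdep : ∀ (b : Finset ι) (a a' : ∀ i, A i), (∀ i ∈ b, a i = a' i) → f b a = f b a')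
    (BlockOpt : Finpartition (Finset.univ : Finset ι) → (∀ i, A i) → Finset ι → Prop)
    (hBlockOpt : ∀ P a b, BlockOpt P a b ↔
      ∀ a' : ∀ i, A i, (∀ i ∉ b, a' i = a i) → f b a ≤ f b a')
    (step : (Finpartition (Finset.univ : Finset ι) × (∀ i, A i)) →
            (Finpartition (Finset.univ : Finset ι) × (∀ i, A i)) → Prop)
    (hstep : ∀ s s', step s s' →
      (s'.1.parts.card < s.1.parts.card) ∨
      (s'.1 = s.1 ∧
        (s'.1.parts.filter (fun b => ¬ BlockOpt s'.1 s'.2 b)).card <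
          (s.1.parts.filter (fun b => ¬ BlockOpt s.1 s.2 b)).card))
    (hprogress : ∀ s, (∃ b ∈ s.1.parts, ¬ BlockOpt s.1 s.2 b) → ∃ s', step s s') :
    (∀ seq : ℕ → (Finpartition (Finset.univ : Finset ι) × (∀ i, A i)),
        ¬ ∀ t, step (seq t) (seq (t + 1))) ∧
    (∀ s, (¬ ∃ s', step s s') →
        ∀ a' : ∀ i, A i,
          ∑ b ∈ s.1.parts, f b s.2 ≤ ∑ b ∈ s.1.parts, f b a') := by
  refine ⟨not_forall_rel_of_lex_lt (fun s => s.1.parts.card)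
    (fun s => (s.1.parts.filter fun b => ¬ BlockOpt s.1 s.2 b).card)
    fun s s' hss' => (hstep s s' hss').imp_right fun ⟨hP, hfewer⟩ => ⟨by rw [hP], hfewer⟩, ?_⟩
  intro s hterm a'
  refine Finset.sum_le_sum fun b hb => ?_
  have hopt : BlockOpt s.1 s.2 b := by_contra fun h => hterm (hprogress s ⟨b, hb, h⟩)
  exact DependsOn.le_of_forall_eqOn_compl_le (hdep b) ((hBlockOpt _ _ _).mp hopt) a'

open Classical in
/-- The group solve/merge process of Anytime PIBT terminates and its terminal joint
action is globally optimal. States are a partition of the agents together with a joint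
action; each step either merges blocks (strictly decreasing the block count) or keeps
the partition and strictly decreases the number of non-block-optimal blocks (a solve
step producing a block-optimal sub-solution). Block costs depend only on the actions
of that block's agents, total cost is the sum of block costs, and whenever some block
is not block-optimal a step is available. Then (1) there is no infinite run, and
(2) every terminal state minimizes the total cost over all joint actions. -/
theorem stmt_14 {ι : Type} [Fintype ι] [DecidableEq ι]
    (A : ι → Type) [∀ i, Nonempty (A i)]
    (f : Finset ι → (∀ i, A i) → ℝ)
    (hdep : ∀ (b : Finset ι) (a a' : ∀ i, A i), (∀ i ∈ b, a i = a' i) → f b a = f b a')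
    (BlockOpt : Finpartition (Finset.univ : Finset ι) → (∀ i, A i) → Finset ι → Prop)
    (hBlockOpt : ∀ P a b, BlockOpt P a b ↔
      ∀ a' : ∀ i, A i, (∀ i ∉ b, a' i = a i) → f b a ≤ f b a')
    (step : (Finpartition (Finset.univ : Finset ι) × (∀ i, A i)) →
            (Finpartition (Finset.univ : Finset ι) × (∀ i, A i)) → Prop)
    (hstep : ∀ s s', step s s' →
      (s'.1.parts.card < s.1.parts.card) ∨
      (s'.1 = s.1 ∧
        (s'.1.parts.filter (fun b => ¬ BlockOpt s'.1 s'.2 b)).card <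
          (s.1.parts.filter (fun b => ¬ BlockOpt s.1 s.2 b)).card))
    (hprogress : ∀ s, (∃ b ∈ s.1.parts, ¬ BlockOpt s.1 s.2 b) → ∃ s', step s s') :
    (∀ seq : ℕ → (Finpartition (Finset.univ : Finset ι) × (∀ i, A i)),
        ¬ ∀ t, step (seq t) (seq (t + 1))) ∧
    (∀ s, (¬ ∃ s', step s s') →
        ∀ a' : ∀ i, A i,
          ∑ b ∈ s.1.parts, f b s.2 ≤ ∑ b ∈ s.1.parts, f b a') :=
  stmt_14_general A f hdep BlockOpt hBlockOpt step hstep hprogress
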